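/- Let n ≥ 2 and let D ⊆ 2^[n] be a down set with ∅ ∈ D such that every maximal element of D contains the element n. Let D' = {A ∈ D : n ∉ A}, regarded as a down set in 2^[n−1], and let U = 2^[n] \ D and U' = 2^[n−1] \ D'. If U' is nonempty, then sdepth(U) ≥ sdepth(U') + 1 and sdepth(D) ≥ sdepth(D') + 1. (This is the reduction step showing a minimal counterexample has no vertex common to all facets.) -/

import Mathlib

open Finset

/-- An interval partition of a family `Q` of subsets of `[n]` (identified with `Fin n`):
a finite collection of nonempty intervals `[A,B]`, each contained in `Q`, pairwise
disjoint, and covering `Q`. -/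
structure IntervalPartition (n : ℕ) (Q : Finset (Finset (Fin n))) where
  pairs : Finset (Finset (Fin n) × Finset (Fin n))
  le : ∀ p ∈ pairs, p.1 ⊆ p.2
  sub : ∀ p ∈ pairs, Finset.Icc p.1 p.2 ⊆ Q
  disj : ∀ p ∈ pairs, ∀ q ∈ pairs, p ≠ q →
    Disjoint (Finset.Icc p.1 p.2) (Finset.Icc q.1 q.2)
  covers : ∀ C ∈ Q, ∃ p ∈ pairs, C ∈ Finset.Icc p.1 p.2

/-- The Stanley depth of a family `Q`: the largest `k` such that some interval
partition of `Q` has every interval's maximal element of size at least `k`. -/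
noncomputable def sdepth {n : ℕ} (Q : Finset (Finset (Fin n))) : ℕ :=
  sSup {k | ∃ P : IntervalPartition n Q, ∀ p ∈ P.pairs, k ≤ p.2.card}

/-- `D` is a down set in `2^[n]`. -/
def IsDownSet {n : ℕ} (D : Finset (Finset (Fin n))) : Prop :=
  ∀ B ∈ D, ∀ A, A ⊆ B → A ∈ D

/-- `B` is a maximal element of the family `D`. -/
def MaxElt {n : ℕ} (D : Finset (Finset (Fin n))) (B : Finset (Fin n)) : Prop :=
  B ∈ D ∧ ∀ C ∈ D, B ⊆ C → B = C

/-!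
Since every facet of `D` contains `x`, a set lies in `D` iff its `x`-erasure does; the same
then holds for the complement `U`. So `D` and `U` are cylinders over `D'` and `U'` in the
direction `x`, and adjoining `x` to the top of every interval of a partition of `D'` (resp.
`U'`) gives a partition of `D` (resp. `U`) whose tops are one element larger.
-/

namespace IntervalPartition

variable {n : ℕ}

def singletons (Q : Finset (Finset (Fin n))) : IntervalPartition n Q where
  pairs := Q.image fun A => (A, A)
  le := by
    simp only [mem_image, forall_exists_index, and_imp]
    rintro _ A - rfl
    exact subset_rfl
  sub := by
    simp only [mem_image, forall_exists_index, and_imp]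
    rintro _ A hA rfl
    simpa using hA
  disj := by
    simp only [mem_image, forall_exists_index, and_imp]
    rintro _ A - rfl _ B - rfl hAB
    simpa [Icc_self] using fun h : A = B => hAB (h ▸ rfl)
  covers C hC := ⟨(C, C), mem_image_of_mem _ hC, by simp⟩

lemma bot_mem {Q : Finset (Finset (Fin n))} (P : IntervalPartition n Q)
    {p : Finset (Fin n) × Finset (Fin n)} (hp : p ∈ P.pairs) : p.1 ∈ Q :=
  P.sub p hp (mem_Icc.2 ⟨le_rfl, P.le p hp⟩)

lemma top_mem {Q : Finset (Finset (Fin n))} (P : IntervalPartition n Q)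
    {p : Finset (Fin n) × Finset (Fin n)} (hp : p ∈ P.pairs) : p.2 ∈ Q :=
  P.sub p hp (mem_Icc.2 ⟨P.le p hp, le_rfl⟩)

lemma mem_Icc_insert_iff {x : Fin n} {A B C : Finset (Fin n)} (hA : x ∉ A) :
    C ∈ Icc A (insert x B) ↔ C.erase x ∈ Icc A B := by
  simp only [mem_Icc, subset_erase, subset_insert_iff, hA, not_false_eq_true,
    and_true]

variable {x : Fin n} {Q' Q : Finset (Finset (Fin n))}

def insertTop (P : IntervalPartition n Q') (hQ'x : ∀ A ∈ Q', x ∉ A)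
    (hQ : ∀ C, C ∈ Q ↔ C.erase x ∈ Q') : IntervalPartition n Q where
  pairs := P.pairs.image fun p => (p.1, insert x p.2)
  le := by
    simp only [mem_image, forall_exists_index, and_imp]
    rintro _ p hp rfl
    exact (P.le p hp).trans (subset_insert _ _)
  sub := by
    simp only [mem_image, forall_exists_index, and_imp]
    rintro _ p hp rfl C hC
    exact (hQ C).2 (P.sub p hp ((mem_Icc_insert_iff (hQ'x _ (P.bot_mem hp))).1 hC))
  disj := by
    simp only [mem_image, forall_exists_index, and_imp]
    rintro _ p hp rfl _ q hq rfl hpq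
    have hpq' : p ≠ q := by rintro rfl; exact hpq rfl
    refine disjoint_left.2 fun C hCp hCq => disjoint_left.1 (P.disj p hp q hq hpq')
      ((mem_Icc_insert_iff (hQ'x _ (P.bot_mem hp))).1 hCp)
      ((mem_Icc_insert_iff (hQ'x _ (P.bot_mem hq))).1 hCq)
  covers C hC := by
    obtain ⟨p, hp, hCp⟩ := P.covers (C.erase x) ((hQ C).1 hC)
    exact ⟨_, mem_image_of_mem _ hp, (mem_Icc_insert_iff (hQ'x _ (P.bot_mem hp))).2 hCp⟩

end IntervalPartition

section sdepth

variable {n : ℕ}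

lemma bddAbove_sdepth_set {Q : Finset (Finset (Fin n))} (hQ : Q.Nonempty) :
    BddAbove {k | ∃ P : IntervalPartition n Q, ∀ p ∈ P.pairs, k ≤ p.2.card} := by
  refine ⟨n, ?_⟩
  rintro k ⟨P, hP⟩
  obtain ⟨C, hC⟩ := hQ
  obtain ⟨p, hp, -⟩ := P.covers C hC
  exact (hP p hp).trans ((card_le_univ _).trans_eq (Fintype.card_fin n))

lemma le_sdepth {Q : Finset (Finset (Fin n))} (hQ : Q.Nonempty) {k : ℕ}
    (P : IntervalPartition n Q) (hP : ∀ p ∈ P.pairs, k ≤ p.2.card) : k ≤ sdepth Q :=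
  le_csSup (bddAbove_sdepth_set hQ) ⟨P, hP⟩

lemma exists_intervalPartition_sdepth_le {Q : Finset (Finset (Fin n))} (hQ : Q.Nonempty) :
    ∃ P : IntervalPartition n Q, ∀ p ∈ P.pairs, sdepth Q ≤ p.2.card :=
  Nat.sSup_mem (s := {k | ∃ P : IntervalPartition n Q, ∀ p ∈ P.pairs, k ≤ p.2.card})
    ⟨0, IntervalPartition.singletons Q, fun _ _ => Nat.zero_le _⟩ (bddAbove_sdepth_set hQ)

lemma sdepth_add_one_le_of_mem_iff_erase_mem {x : Fin n} {Q' Q : Finset (Finset (Fin n))}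
    (hQ'x : ∀ A ∈ Q', x ∉ A) (hQ' : Q'.Nonempty) (hQ : ∀ C, C ∈ Q ↔ C.erase x ∈ Q') :
    sdepth Q' + 1 ≤ sdepth Q := by
  obtain ⟨P, hP⟩ := exists_intervalPartition_sdepth_le hQ'
  have hQne : Q.Nonempty := by
    obtain ⟨A, hA⟩ := hQ'
    exact ⟨A, (hQ A).2 (by rwa [erase_eq_of_notMem (hQ'x A hA)])⟩
  refine le_sdepth hQne (P.insertTop hQ'x hQ) ?_
  simp only [IntervalPartition.insertTop, mem_image, forall_exists_index, and_imp]
  rintro _ p hp rfl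
  rw [card_insert_of_notMem (hQ'x _ (P.top_mem hp))]
  exact Nat.add_le_add_right (hP p hp) 1

end sdepth

lemma insert_mem_of_forall_maxElt_mem {n : ℕ} {x : Fin n} {D : Finset (Finset (Fin n))}
    (hD : IsDownSet D) (hfacets : ∀ B, MaxElt D B → x ∈ B) {A : Finset (Fin n)}
    (hA : A ∈ D) : insert x A ∈ D := by
  obtain ⟨B, hB, hBmax⟩ := exists_max_image ({C ∈ D | A ⊆ C}) card ⟨A, by simp [hA]⟩
  rw [mem_filter] at hB
  -- a largest member of `D` above `A` is a facet
  have hmax : MaxElt D B := ⟨hB.1, fun C hC hBC =>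
    eq_of_subset_of_card_le hBC (hBmax C (mem_filter.2 ⟨hC, hB.2.trans hBC⟩))⟩
  exact hD B hB.1 _ (insert_subset (hfacets B hmax) hB.2)

lemma mem_iff_erase_mem_of_forall_maxElt_mem {n : ℕ} {x : Fin n} {D : Finset (Finset (Fin n))}
    (hD : IsDownSet D) (hfacets : ∀ B, MaxElt D B → x ∈ B) (C : Finset (Fin n)) :
    C ∈ D ↔ C.erase x ∈ D :=
  ⟨fun h => hD C h _ (erase_subset x C), fun h =>
    hD _ (insert_mem_of_forall_maxElt_mem hD hfacets h) C (subset_insert_iff.2 subset_rfl)⟩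

theorem reduction_vertex_in_all_facets_general
    (n : ℕ) (x : Fin n)
    (D : Finset (Finset (Fin n))) (hD : IsDownSet D) (h0 : ∅ ∈ D)
    (hfacets : ∀ B, MaxElt D B → x ∈ B)
    (hU' : ((Finset.univ.erase x).powerset \ D.filter (fun A => x ∉ A)).Nonempty) :
    sdepth (D.filter (fun A => x ∉ A)) + 1 ≤ sdepth D ∧
      sdepth ((Finset.univ.erase x).powerset \ D.filter (fun A => x ∉ A)) + 1 ≤
        sdepth ((Finset.univ : Finset (Finset (Fin n))) \ D) := by
  have hcyl := mem_iff_erase_mem_of_forall_maxElt_mem hD hfacets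
  constructor
  · refine sdepth_add_one_le_of_mem_iff_erase_mem (fun A hA => (mem_filter.1 hA).2)
      ⟨∅, mem_filter.2 ⟨h0, notMem_empty x⟩⟩ fun C => ?_
    simp [hcyl C]
  · refine sdepth_add_one_le_of_mem_iff_erase_mem (x := x) (fun A hA hxA => ?_) hU' fun C => ?_
    · exact (mem_erase.1 (mem_powerset.1 (mem_sdiff.1 hA).1 hxA)).1 rfl
    · simp [hcyl C, erase_subset_erase x (subset_univ C)]

/-- If every maximal element of the down set `D ⊆ 2^[n]` contains the element `x`
(playing the role of `n`), then with `D' = {A ∈ D : x ∉ A}` regarded as a down set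
in `2^([n] \ {x})`, `U = 2^[n] \ D`, and `U' = 2^([n] \ {x}) \ D'` nonempty, we have
`sdepth(U) ≥ sdepth(U') + 1` and `sdepth(D) ≥ sdepth(D') + 1`. -/
theorem reduction_vertex_in_all_facets
    (n : ℕ) (hn : 2 ≤ n) (x : Fin n)
    (D : Finset (Finset (Fin n))) (hD : IsDownSet D) (h0 : ∅ ∈ D)
    (hfacets : ∀ B, MaxElt D B → x ∈ B)
    (hU' : ((Finset.univ.erase x).powerset \ D.filter (fun A => x ∉ A)).Nonempty) :
    sdepth (D.filter (fun A => x ∉ A)) + 1 ≤ sdepth D ∧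
      sdepth ((Finset.univ.erase x).powerset \ D.filter (fun A => x ∉ A)) + 1 ≤
        sdepth ((Finset.univ : Finset (Finset (Fin n))) \ D) :=
  reduction_vertex_in_all_facets_general n x D hD h0 hfacets hU'
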